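/- arXiv:1604.04338 — 4 statements merged into one kernel-verified Lean document; each statement's English description precedes it below -/
import Mathlib

section
/- Let Δ : ℕ → ℕ → ℝ be a function satisfying: (i) Δ(3,n) ≤ n - 3 for all n ≥ 3; (ii) Δ(d,n) ≤ Δ(d-1,n-1) whenever d ≤ n < 2d and d ≥ 4; (iii) the Kalai–Kleitman inequality Δ(d,n) ≤ Δ(d-1,n-1) + 2·Δ(d,⌊n/2⌋) + 2 whenever ⌊n/2⌋ ≥ d ≥ 2; and (iv) Δ is nonnegative. Then for any real parameters α, k > 1 with 1/α + 1/2^(k-1) ≤ 1, we have Δ(d,n) ≤ α^(d-3) · (n-d)^k for all n ≥ d ≥ 3. -/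
/-!
Induction on `d`, and for fixed `d` strong induction on `n`, with
`g(d, n) = α^(d-3) (n-d)^k`. For `n < 2d` the low-facet reduction and `α ≥ 1` give
`Δ(d, n) ≤ g(d-1, n-1) ≤ g(d, n)`. Otherwise, with `m = n - d` and `t = ⌊n/2⌋ - d ≤ m/2 - 1`,
superadditivity of `x ↦ x^k` gives `t^k + 1 ≤ (m/2)^k`, so the additive constant of the
Kalai–Kleitman inequality is absorbed:
`2 g(d, ⌊n/2⌋) + 2 ≤ 2 α^(d-3) (m/2)^k = α^(d-3) m^k / 2^(k-1)`.
Together with `g(d-1, n-1) = α^(d-4) m^k` the right-hand side is at most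
`α^(d-3) m^k (1/α + 1/2^(k-1)) ≤ g(d, n)`.
-/

noncomputable def diameterBound (α k : ℝ) (d n : ℕ) : ℝ := α ^ (d - 3) * ((n : ℝ) - d) ^ k

lemma natCast_le_natCast_rpow {k : ℝ} (hk : 1 ≤ k) (m : ℕ) : (m : ℝ) ≤ (m : ℝ) ^ k := by
  rcases Nat.eq_zero_or_pos m with rfl | hm
  · simp [Real.zero_rpow (by linarith : k ≠ 0)]
  · exact Real.self_le_rpow_of_one_le (by exact_mod_cast hm) hk

lemma two_mul_half_rpow {m : ℝ} (hm : 0 ≤ m) (k : ℝ) :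
    2 * (m / 2) ^ k = m ^ k / (2 : ℝ) ^ (k - 1) := by
  rw [Real.div_rpow hm zero_le_two, Real.rpow_sub zero_lt_two, Real.rpow_one]
  field_simp

lemma sub_three_le_diameterBound_three (α : ℝ) {k : ℝ} (hk : 1 ≤ k) {n : ℕ} (hn : 3 ≤ n) :
    (n : ℝ) - 3 ≤ diameterBound α k 3 n := by
  have h := natCast_le_natCast_rpow hk (n - 3)
  rw [Nat.cast_sub hn] at h
  simpa [diameterBound] using h

lemma diameterBound_pred_le {α : ℝ} (k : ℝ) (hα : 1 ≤ α) {d n : ℕ} (hdn : d + 1 ≤ n) :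
    diameterBound α k d (n - 1) ≤ diameterBound α k (d + 1) n := by
  have hbase : ((n - 1 : ℕ) : ℝ) - d = (n : ℝ) - (d + 1 : ℕ) := by
    push_cast [Nat.cast_sub (by omega : 1 ≤ n)]
    ring
  have hnonneg : (0 : ℝ) ≤ (n : ℝ) - (d + 1 : ℕ) := sub_nonneg.2 (by exact_mod_cast hdn)
  unfold diameterBound
  rw [hbase]
  exact mul_le_mul_of_nonneg_right (pow_le_pow_right₀ hα (by omega)) (Real.rpow_nonneg hnonneg k)

lemma add_two_mul_rpow_add_two_le {α k A m t : ℝ} (hα : 1 ≤ α) (hk : 1 ≤ k)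
    (hcond : 1 / α + 1 / (2 : ℝ) ^ (k - 1) ≤ 1) (hA : 1 ≤ A) (ht : 0 ≤ t) (htm : t + 1 ≤ m / 2) :
    A * m ^ k + 2 * (α * A * t ^ k) + 2 ≤ α * A * m ^ k := by
  have hαA : 1 ≤ α * A := one_le_mul_of_one_le_of_one_le hα hA
  have hm : 0 ≤ m := by linarith
  have hsuper : t ^ k + 1 ≤ (m / 2) ^ k :=
    calc t ^ k + 1 = t ^ k + 1 ^ k := by rw [Real.one_rpow]
      _ ≤ (t + 1) ^ k := Real.add_rpow_le_rpow_add ht zero_le_one hk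
      _ ≤ (m / 2) ^ k := Real.rpow_le_rpow (by linarith) htm (by linarith)
  calc A * m ^ k + 2 * (α * A * t ^ k) + 2 ≤ A * m ^ k + α * A * (2 * (m / 2) ^ k) := by
        nlinarith [mul_le_mul_of_nonneg_left hsuper (by linarith : (0 : ℝ) ≤ α * A)]
    _ = α * A * m ^ k * (1 / α + 1 / (2 : ℝ) ^ (k - 1)) := by
        rw [two_mul_half_rpow hm]
        field_simp
    _ ≤ α * A * m ^ k :=
        mul_le_of_le_one_right (by have := Real.rpow_nonneg hm k; positivity) hcond

lemma diameterBound_kalaiKleitman_le {α k : ℝ} (hα : 1 ≤ α) (hk : 1 ≤ k)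
    (hcond : 1 / α + 1 / (2 : ℝ) ^ (k - 1) ≤ 1) {d n : ℕ} (hd : 3 ≤ d) (hn : 2 * (d + 1) ≤ n) :
    diameterBound α k d (n - 1) + 2 * diameterBound α k (d + 1) (n / 2) + 2 ≤
      diameterBound α k (d + 1) n := by
  have hpow : α ^ (d + 1 - 3) = α * α ^ (d - 3) := by
    rw [show d + 1 - 3 = d - 3 + 1 by omega, pow_succ']
  have hpred : ((n - 1 : ℕ) : ℝ) - d = (n : ℝ) - (d + 1 : ℕ) := by
    push_cast [Nat.cast_sub (by omega : 1 ≤ n)]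
    ring
  have ht : (0 : ℝ) ≤ ((n / 2 : ℕ) : ℝ) - (d + 1 : ℕ) := sub_nonneg.2 (Nat.cast_le.2 (by omega))
  have htm : ((n / 2 : ℕ) : ℝ) - (d + 1 : ℕ) + 1 ≤ ((n : ℝ) - (d + 1 : ℕ)) / 2 := by
    have hhalf : ((n / 2 : ℕ) : ℝ) ≤ (n : ℝ) / 2 := Nat.cast_div_le
    have hd' : (3 : ℝ) ≤ d := by exact_mod_cast hd
    push_cast
    linarith
  unfold diameterBound
  rw [hpred, hpow]
  exact add_two_mul_rpow_add_two_le hα hk hcond (one_le_pow₀ hα) ht htm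

theorem tail_bound_unified_general (Δ : ℕ → ℕ → ℝ)
    (h3 : ∀ n : ℕ, 3 ≤ n → Δ 3 n ≤ (n : ℝ) - 3)
    (hlow : ∀ d n : ℕ, 4 ≤ d → d ≤ n → n < 2 * d → Δ d n ≤ Δ (d - 1) (n - 1))
    (hKK : ∀ d n : ℕ, 2 ≤ d → d ≤ n / 2 →
      Δ d n ≤ Δ (d - 1) (n - 1) + 2 * Δ d (n / 2) + 2)
    (α k : ℝ) (hα : 1 < α) (hk : 1 < k)
    (hcond : 1 / α + 1 / (2 : ℝ) ^ (k - 1) ≤ 1) :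
    ∀ d n : ℕ, 3 ≤ d → d ≤ n → Δ d n ≤ α ^ (d - 3) * ((n : ℝ) - d) ^ k := by
  intro d n hd
  induction d, hd using Nat.le_induction generalizing n with
  | base => exact fun hn => (h3 n hn).trans (sub_three_le_diameterBound_three α hk.le hn)
  | succ d hd IH =>
    induction n using Nat.strong_induction_on with
    | _ n IHn =>
      intro hdn
      rcases lt_or_ge n (2 * (d + 1)) with hlt | hge
      · calc Δ (d + 1) n ≤ Δ d (n - 1) := hlow (d + 1) n (by omega) hdn hlt
          _ ≤ diameterBound α k d (n - 1) := IH (n - 1) (by omega)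
          _ ≤ diameterBound α k (d + 1) n := diameterBound_pred_le k hα.le hdn
      · calc Δ (d + 1) n ≤ Δ d (n - 1) + 2 * Δ (d + 1) (n / 2) + 2 :=
              hKK (d + 1) n (by omega) (by omega)
          _ ≤ diameterBound α k d (n - 1) + 2 * diameterBound α k (d + 1) (n / 2) + 2 := by
              gcongr
              · exact IH (n - 1) (by omega)
              · exact IHn (n / 2) (by omega) (by omega)
          _ ≤ diameterBound α k (d + 1) n :=
              diameterBound_kalaiKleitman_le hα.le hk.le hcond hd hge

theorem tail_bound_unified (Δ : ℕ → ℕ → ℝ)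
    (h3 : ∀ n : ℕ, 3 ≤ n → Δ 3 n ≤ (n : ℝ) - 3)
    (hlow : ∀ d n : ℕ, 4 ≤ d → d ≤ n → n < 2 * d → Δ d n ≤ Δ (d - 1) (n - 1))
    (hKK : ∀ d n : ℕ, 2 ≤ d → d ≤ n / 2 →
      Δ d n ≤ Δ (d - 1) (n - 1) + 2 * Δ d (n / 2) + 2)
    (hpos : ∀ d n : ℕ, 0 ≤ Δ d n)
    (α k : ℝ) (hα : 1 < α) (hk : 1 < k)
    (hcond : 1 / α + 1 / (2 : ℝ) ^ (k - 1) ≤ 1) :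
    ∀ d n : ℕ, 3 ≤ d → d ≤ n → Δ d n ≤ α ^ (d - 3) * ((n : ℝ) - d) ^ k :=
  tail_bound_unified_general Δ h3 hlow hKK α k hα hk hcond
end

section
/- Let Δ : ℕ → ℕ → ℝ satisfy: Δ(3,n) ≤ n - 3 for n ≥ 3; Δ(d,n) ≤ Δ(d-1,n-1) for d ≤ n < 2d, d ≥ 4; Δ(d,n) ≤ Δ(d-1,n-1) + 2·Δ(d,⌊n/2⌋) + 2 for ⌊n/2⌋ ≥ d ≥ 2; and Δ ≥ 0. Then Δ(d,n) ≤ 2^(d-3) · (n-d)^2 for all n ≥ d ≥ 3. -/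
theorem tail_bound_quadratic (Δ : ℕ → ℕ → ℝ)
    (h3 : ∀ n : ℕ, 3 ≤ n → Δ 3 n ≤ (n : ℝ) - 3)
    (hlow : ∀ d n : ℕ, 4 ≤ d → d ≤ n → n < 2 * d → Δ d n ≤ Δ (d - 1) (n - 1))
    (hKK : ∀ d n : ℕ, 2 ≤ d → d ≤ n / 2 →
      Δ d n ≤ Δ (d - 1) (n - 1) + 2 * Δ d (n / 2) + 2)
    (hpos : ∀ d n : ℕ, 0 ≤ Δ d n) :
    ∀ d n : ℕ, 3 ≤ d → d ≤ n → Δ d n ≤ 2 ^ (d - 3) * ((n : ℝ) - d) ^ 2 := by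
  intro d
  induction d using Nat.strong_induction_on with
  | _ d IHd =>
    intro n
    induction n using Nat.strong_induction_on with
    | _ n IHn =>
      intro hd hn
      rcases eq_or_lt_of_le hd with h3d | h4d
      · -- d = 3
        subst h3d
        have h := h3 n hn
        simp only [Nat.sub_self, pow_zero, one_mul]
        rcases Nat.lt_or_ge n 4 with h4 | h4
        · have : n = 3 := by omega
          subst this
          norm_num at h ⊢
          linarith
        · have hx : (4 : ℝ) ≤ (n : ℝ) := by exact_mod_cast h4
          push_cast
          nlinarith [mul_nonneg (by linarith : (0:ℝ) ≤ (n:ℝ) - 3) (by linarith : (0:ℝ) ≤ (n:ℝ) - 4)]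
      · -- d ≥ 4
        have hd4 : 4 ≤ d := h4d
        have hd1 : 3 ≤ d - 1 := by omega
        have hcast1 : ((n - 1 : ℕ) : ℝ) - ((d - 1 : ℕ) : ℝ) = (n : ℝ) - d := by
          have hn1 : 1 ≤ n := by omega
          have hdd : 1 ≤ d := by omega
          push_cast [hn1, hdd]
          ring
        have hpowlt : (d - 1) - 3 = d - 4 := by omega
        have hIHd1 : Δ (d - 1) (n - 1) ≤ 2 ^ (d - 4) * ((n : ℝ) - d) ^ 2 := by
          have := IHd (d - 1) (by omega) (n - 1) hd1 (by omega)
          rwa [hcast1, hpowlt] at this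
        rcases Nat.lt_or_ge n (2 * d) with hlt | hge
        · -- low case
          have h1 := hlow d n hd4 hn hlt
          have hmono : (2 : ℝ) ^ (d - 4) ≤ 2 ^ (d - 3) :=
            pow_le_pow_right₀ (by norm_num) (by omega)
          have hsq : (0 : ℝ) ≤ ((n : ℝ) - d) ^ 2 := sq_nonneg _
          nlinarith
        · -- KK case
          have hm : d ≤ n / 2 := by omega
          have h1 := hKK d n (by omega) hm
          have hmlt : n / 2 < n := by omega
          have hIHm := IHn (n / 2) hmlt hd hm
          have hmle : ((n / 2 : ℕ) : ℝ) ≤ (n : ℝ) / 2 := by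
            have h0 := Nat.div_mul_le_self n 2
            have h0' : ((n / 2 : ℕ) : ℝ) * 2 ≤ (n : ℝ) := by exact_mod_cast h0
            linarith
          have hmged : (d : ℝ) ≤ ((n / 2 : ℕ) : ℝ) := by exact_mod_cast hm
          have hsqle : (((n / 2 : ℕ) : ℝ) - d) ^ 2 ≤ ((n : ℝ) / 2 - d) ^ 2 := by
            apply sq_le_sq'
            · nlinarith
            · linarith
          have hIHm' : Δ d (n / 2) ≤ 2 ^ (d - 3) * ((n : ℝ) / 2 - d) ^ 2 := by
            refine le_trans hIHm ?_
            have hp : (0 : ℝ) < 2 ^ (d - 3) := by positivity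
            nlinarith
          set c : ℝ := 2 ^ (d - 4) with hc
          have hc1 : (1 : ℝ) ≤ c := one_le_pow₀ (by norm_num)
          have h2c : (2 : ℝ) ^ (d - 3) = 2 * c := by
            rw [hc, ← pow_succ']
            congr 1
            omega
          have hND : 2 * (d : ℝ) ≤ (n : ℝ) := by exact_mod_cast hge
          have hD4 : (4 : ℝ) ≤ (d : ℝ) := by exact_mod_cast hd4
          rw [h2c]
          rw [h2c] at hIHm'
          have h6 : (16 : ℝ) ≤ (d:ℝ) * (2*(n:ℝ) - 3*(d:ℝ)) := by nlinarith
          have h7 : (16 : ℝ) ≤ c * ((d:ℝ) * (2*(n:ℝ) - 3*(d:ℝ))) := by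
            calc (16:ℝ) ≤ (d:ℝ) * (2*(n:ℝ) - 3*(d:ℝ)) := h6
              _ ≤ c * ((d:ℝ) * (2*(n:ℝ) - 3*(d:ℝ))) :=
                le_mul_of_one_le_left (by linarith) hc1
          have e1 : 2*c*((n:ℝ)-(d:ℝ))^2 =
              c*((n:ℝ)-(d:ℝ))^2 + 2*(2*c*((n:ℝ)/2-(d:ℝ))^2) + 2
              + (c*((d:ℝ)*(2*(n:ℝ)-3*(d:ℝ))) - 2) := by ring
          linarith [hpos d (n/2)]
end

section
/- Let α, k be real numbers with α > 1, k > 1, 1/α + 1/2^(k-1) ≤ 1, and let g(d,n) = α^(d-3)·(n-d)^k. Then for all natural numbers d ≥ 4 and n ≥ 2d, g(d-1, n-1) + 2·g(d, ⌊n/2⌋) + 2 ≤ g(d,n). -/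
private lemma rpow_superadd {a b k : ℝ} (ha : 0 ≤ a) (hb : 0 ≤ b) (hk : 1 ≤ k) :
    a ^ k + b ^ k ≤ (a + b) ^ k := by
  have := NNReal.add_rpow_le_rpow_add ⟨a, ha⟩ ⟨b, hb⟩ hk
  exact_mod_cast this

set_option maxHeartbeats 800000 in
theorem inductive_step (α k : ℝ) (hα : 1 < α) (hk : 1 < k)
    (hcond : 1 / α + 1 / (2 : ℝ) ^ (k - 1) ≤ 1) :
    ∀ d n : ℕ, 4 ≤ d → 2 * d ≤ n →
      α ^ (d - 1 - 3) * (((n - 1 : ℕ) : ℝ) - ((d - 1 : ℕ) : ℝ)) ^ k +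
        2 * (α ^ (d - 3) * (((n / 2 : ℕ) : ℝ) - d) ^ k) + 2 ≤
      α ^ (d - 3) * ((n : ℝ) - d) ^ k := by
  intro d n hd hn
  have hα0 : (0:ℝ) < α := by linarith
  have hd4 : (4:ℝ) ≤ (d:ℝ) := by exact_mod_cast hd
  have hn2d : 2 * (d:ℝ) ≤ (n:ℝ) := by exact_mod_cast hn
  have e1 : d - 1 - 3 = d - 4 := by omega
  have e2 : d - 3 = (d - 4) + 1 := by omega
  have hn1 : ((n - 1 : ℕ) : ℝ) = (n:ℝ) - 1 := by
    have h : 1 ≤ n := by omega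
    push_cast [h]; ring
  have hd1 : ((d - 1 : ℕ) : ℝ) = (d:ℝ) - 1 := by
    have h : 1 ≤ d := by omega
    push_cast [h]; ring
  rw [e1, e2, hn1, hd1, pow_succ]
  set A : ℝ := α ^ (d - 4) with hA
  have hA1 : (1:ℝ) ≤ A := one_le_pow₀ hα.le
  clear_value A
  have hA0 : (0:ℝ) < A := by linarith
  set m : ℝ := (n:ℝ) - (d:ℝ) with hm
  have hmn : (n:ℝ) - 1 - ((d:ℝ) - 1) = m := by rw [hm]; ring
  have hm4 : 4 ≤ m := by rw [hm]; linarith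
  rw [hmn]
  set f : ℝ := ((n / 2 : ℕ) : ℝ) - (d:ℝ) with hf
  have hf0 : 0 ≤ f := by
    have h1 : d ≤ n / 2 := Nat.le_div_iff_mul_le (by norm_num) |>.mpr (by omega)
    have h2 : (d:ℝ) ≤ ((n/2 : ℕ) : ℝ) := by exact_mod_cast h1
    rw [hf]; linarith
  have hfle : f ≤ m / 2 - 2 := by
    have h1 : ((n/2 : ℕ) : ℝ) ≤ (n:ℝ) / 2 := by exact_mod_cast Nat.cast_div_le
    rw [hf, hm]; linarith
  clear_value m f
  have hk0 : 0 ≤ k := by linarith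
  set P : ℝ := (2:ℝ) ^ (k - 1) with hPdef
  have hP : (0:ℝ) < P := Real.rpow_pos_of_pos (by norm_num) _
  have hP1 : (1:ℝ) ≤ P := Real.one_le_rpow (by norm_num) (by linarith)
  have h2k : (2:ℝ) ^ k = 2 * P := by
    have h := Real.rpow_add (by norm_num : (0:ℝ) < 2) 1 (k-1)
    rw [show (1:ℝ) + (k-1) = k by ring, Real.rpow_one] at h
    rw [hPdef, h]
  clear_value P
  have hm2 : (0:ℝ) ≤ m / 2 - 2 := by linarith
  have hfk : f ^ k ≤ (m / 2 - 2) ^ k := Real.rpow_le_rpow hf0 hfle hk0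
  have hsup : (m / 2 - 2) ^ k + (2:ℝ) ^ k ≤ (m / 2) ^ k := by
    have h := rpow_superadd hm2 (by norm_num : (0:ℝ) ≤ 2) hk.le
    rwa [show m / 2 - 2 + 2 = m / 2 by ring] at h
  have hdiv : (m / 2) ^ k = m ^ k / (2:ℝ) ^ k :=
    Real.div_rpow (by linarith) (by norm_num) k
  have hmk0 : 0 ≤ m ^ k := Real.rpow_nonneg (by linarith) k
  set X : ℝ := m ^ k with hX
  set F : ℝ := f ^ k with hF
  clear_value X F
  have hfbound : F ≤ X / (2 * P) - 2 * P := by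
    rw [hdiv, h2k] at hsup
    have h2P : 2 * P ≠ 0 := by positivity
    have : (m/2-2)^k ≤ X / (2*P) - 2*P := by linarith
    linarith [hfk.trans this]
  -- hcond: α / P ≤ α - 1
  have hcond' : α / P ≤ α - 1 := by
    have h1 : 1 / P ≤ 1 - 1 / α := by linarith
    have h2 : α * (1 / P) ≤ α * (1 - 1 / α) := mul_le_mul_of_nonneg_left h1 hα0.le
    rw [mul_sub, mul_one_div, mul_one, mul_one_div, div_self (ne_of_gt hα0)] at h2
    linarith
  have hh1 : 2 * (A * α * F) ≤ 2 * (A * α * (X / (2*P) - 2*P)) := by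
    have := mul_le_mul_of_nonneg_left hfbound (by positivity : (0:ℝ) ≤ A * α)
    linarith
  have e3 : 2 * (A * α * (X / (2*P) - 2*P)) = A * α * X / P - 4 * (A * α * P) := by
    field_simp; ring
  have hh2 : A * α * X / P ≤ A * α * X - A * X := by
    have h3 : (α / P) * (A * X) ≤ (α - 1) * (A * X) :=
      mul_le_mul_of_nonneg_right hcond' (by positivity)
    have e4 : (α / P) * (A * X) = A * α * X / P := by ring
    have e5 : (α - 1) * (A * X) = A * α * X - A * X := by ring
    rw [e4, e5] at h3; exact h3
  have hAαP : (2:ℝ) ≤ 4 * (A * α * P) := by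
    have ha1 : (1:ℝ) * 1 ≤ A * α := mul_le_mul hA1 hα.le zero_le_one (by linarith)
    have ha2 : (1:ℝ) * 1 ≤ A * α * P :=
      mul_le_mul (by linarith) hP1 zero_le_one (by linarith)
    linarith
  calc A * X + 2 * (A * α * F) + 2
      ≤ A * X + (A * α * X / P - 4 * (A * α * P)) + 2 := by rw [← e3]; linarith
    _ ≤ A * X + (A * α * X - A * X) - 4 * (A * α * P) + 2 := by linarith
    _ ≤ A * α * X := by linarith
end

section
/- Let Δ : ℕ → ℕ → ℝ be nonnegative and satisfy Δ(3,n) ≤ n − 3 for n ≥ 3, Δ(d,n) ≤ Δ(d-1,n-1) for d ≤ n < 2d with d ≥ 4, and the Kalai–Kleitman inequality Δ(d,n) ≤ Δ(d-1,n-1) + 2·Δ(d,⌊n/2⌋) + 2 for ⌊n/2⌋ ≥ d ≥ 2. Then for every ε > 0 there exists a constant N(d,ε) = d + ⌈(2^(ε/2)/(2^(ε/2)−1))^(2(d-3)/ε)⌉ such that Δ(d,n) ≤ (n-d)^(1+ε) for all n ≥ N(d,ε) and d ≥ 3. -/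
set_option maxHeartbeats 1600000 in
theorem KK_implies_tail_almost_linear (Δ : ℕ → ℕ → ℝ)
    (hpos : ∀ d n : ℕ, 0 ≤ Δ d n)
    (h3 : ∀ n : ℕ, 3 ≤ n → Δ 3 n ≤ (n : ℝ) - 3)
    (hlow : ∀ d n : ℕ, 4 ≤ d → d ≤ n → n < 2 * d → Δ d n ≤ Δ (d - 1) (n - 1))
    (hKK : ∀ d n : ℕ, 2 ≤ d → d ≤ n / 2 →
      Δ d n ≤ Δ (d - 1) (n - 1) + 2 * Δ d (n / 2) + 2) :
    ∀ ε : ℝ, 0 < ε → ∀ d n : ℕ, 3 ≤ d →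
      d + ⌈((2 : ℝ) ^ (ε / 2) / ((2 : ℝ) ^ (ε / 2) - 1)) ^ (2 * ((d : ℝ) - 3) / ε)⌉₊ ≤ n →
      Δ d n ≤ ((n : ℝ) - d) ^ (1 + ε) := by
  intro ε hε d n hd hn
  set γ : ℝ := ε / 2 with hγdef
  have hγ : 0 < γ := by positivity
  set t : ℝ := (2 : ℝ) ^ γ with htdef
  have ht1 : 1 < t :=
    (Real.one_lt_rpow_iff_of_pos (by norm_num)).mpr (Or.inl ⟨by norm_num, hγ⟩)
  have ht0 : 0 < t := by linarith
  set c : ℝ := t / (t - 1) with hcdef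
  have hc1 : 1 < c := by
    rw [hcdef, lt_div_iff₀ (by linarith)]; linarith
  have hc0 : 0 < c := by linarith
  have htne : t ≠ 0 := ht0.ne'
  have ht1ne : t - 1 ≠ 0 := by linarith
  have hcc : c = 1 + c / t := by
    rw [hcdef]
    field_simp
    ring
  have hct : 4 ≤ c * t := by
    have h1 : c * t = t * t / (t - 1) := by rw [hcdef]; ring
    rw [h1, le_div_iff₀ (by linarith)]
    nlinarith [sq_nonneg (t - 2)]
  -- halving lemma
  have Hhalf : ∀ x y : ℝ, 0 ≤ y → 2 * y ≤ x → 2 * y ^ (1 + γ) ≤ x ^ (1 + γ) / t := by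
    intro x y hy hxy
    have hx : 0 ≤ x := le_trans (by linarith) hxy
    have h1 : y ≤ x / 2 := by linarith
    have h2 : y ^ (1 + γ) ≤ (x / 2) ^ (1 + γ) :=
      Real.rpow_le_rpow hy h1 (by positivity)
    have h3' : (x / 2) ^ (1 + γ) = x ^ (1 + γ) / 2 ^ (1 + γ) :=
      Real.div_rpow hx (by norm_num : (0:ℝ) ≤ 2) (1 + γ)
    have h4 : (2 : ℝ) ^ (1 + γ) = 2 * t := by
      rw [htdef, Real.rpow_add (by norm_num : (0:ℝ) < 2), Real.rpow_one]
    have h5 : y ^ (1 + γ) ≤ x ^ (1 + γ) / (2 * t) := by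
      rw [← h4, ← h3']; exact h2
    have h6 : 2 * (x ^ (1 + γ) / (2 * t)) = x ^ (1 + γ) / t := by
      field_simp
    linarith [h5]
  -- Weak bound W : Δ d n + 2 ≤ c^(d-3) * (n - d + 2)^(1+γ)
  have W : ∀ d, 3 ≤ d → ∀ n, d ≤ n →
      Δ d n + 2 ≤ c ^ (d - 3) * ((n : ℝ) - (d : ℝ) + 2) ^ (1 + γ) := by
    intro d hd
    induction d, hd using Nat.le_induction with
    | base =>
      intro n hn
      have hbase : (1 : ℝ) ≤ (n : ℝ) - 3 + 2 := by
        have : (3 : ℝ) ≤ n := by exact_mod_cast hn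
        linarith
      have h1 : Δ 3 n + 2 ≤ (n : ℝ) - 3 + 2 := by linarith [h3 n hn]
      have h2 : (n : ℝ) - 3 + 2 ≤ ((n : ℝ) - 3 + 2) ^ (1 + γ) := by
        nth_rewrite 1 [← Real.rpow_one ((n : ℝ) - 3 + 2)]
        exact Real.rpow_le_rpow_of_exponent_le hbase (by linarith)
      simpa using h1.trans h2
    | succ d hd3 IH =>
      intro n
      induction n using Nat.strong_induction_on with
      | _ n IHn =>
        intro hdn
        have hd4 : 4 ≤ d + 1 := by omega
        have hXpos : (0 : ℝ) ≤ (n : ℝ) - ((d + 1 : ℕ) : ℝ) + 2 := by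
          have : ((d + 1 : ℕ) : ℝ) ≤ (n : ℝ) := by exact_mod_cast hdn
          linarith
        have hXp : (0 : ℝ) ≤ ((n : ℝ) - ((d + 1 : ℕ) : ℝ) + 2) ^ (1 + γ) :=
          Real.rpow_nonneg hXpos _
        have hpow : c ^ (d + 1 - 3) = c ^ (d - 3) * c := by
          have hstep : d + 1 - 3 = (d - 3) + 1 := by omega
          rw [hstep, pow_succ]
        have hcpow0 : (0 : ℝ) < c ^ (d - 3) := pow_pos hc0 _
        have hcast : ((n - 1 : ℕ) : ℝ) - (d : ℝ) + 2 = (n : ℝ) - ((d + 1 : ℕ) : ℝ) + 2 := by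
          have h1n : 1 ≤ n := by omega
          push_cast [h1n]; ring
        by_cases hcase : n < 2 * (d + 1)
        · -- low case: use hlow
          have hl := hlow (d + 1) n hd4 hdn hcase
          have hIH := IH (n - 1) (by omega)
          rw [hcast] at hIH
          simp only [Nat.add_sub_cancel] at hl
          have hmono : c ^ (d - 3) * ((n : ℝ) - ((d + 1 : ℕ) : ℝ) + 2) ^ (1 + γ) ≤
              c ^ (d + 1 - 3) * ((n : ℝ) - ((d + 1 : ℕ) : ℝ) + 2) ^ (1 + γ) := by
            rw [hpow]
            exact mul_le_mul_of_nonneg_right (le_mul_of_one_le_right hcpow0.le hc1.le) hXp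
          linarith
        · -- KK case
          push_neg at hcase
          have hhalf_ge : d + 1 ≤ n / 2 := by omega
          have hkk := hKK (d + 1) n (by omega) hhalf_ge
          simp only [Nat.add_sub_cancel] at hkk
          have hIH := IH (n - 1) (by omega)
          rw [hcast] at hIH
          have hB := IHn (n / 2) (by omega) (by omega)
          have hYpos : (0 : ℝ) ≤ ((n / 2 : ℕ) : ℝ) - ((d + 1 : ℕ) : ℝ) + 2 := by
            have : ((d + 1 : ℕ) : ℝ) ≤ ((n / 2 : ℕ) : ℝ) := by exact_mod_cast hhalf_ge
            linarith
          have hYX : 2 * (((n / 2 : ℕ) : ℝ) - ((d + 1 : ℕ) : ℝ) + 2) ≤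
              (n : ℝ) - ((d + 1 : ℕ) : ℝ) + 2 := by
            have hnat : 2 * (n / 2 - (d + 1) + 2) ≤ n - (d + 1) + 2 := by omega
            have := (Nat.cast_le (α := ℝ)).mpr hnat
            push_cast [hhalf_ge, hdn] at this
            push_cast
            linarith
          have hH := Hhalf _ _ hYpos hYX
          set X1 : ℝ := ((n : ℝ) - ((d + 1 : ℕ) : ℝ) + 2) ^ (1 + γ) with hX1
          set Y1 : ℝ := (((n / 2 : ℕ) : ℝ) - ((d + 1 : ℕ) : ℝ) + 2) ^ (1 + γ) with hY1
          have hH2' : 2 * (c ^ (d + 1 - 3) * Y1) ≤ c ^ (d - 3) * X1 * (c / t) := by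
            have hmul := mul_le_mul_of_nonneg_left hH (pow_pos hc0 (d + 1 - 3)).le
            calc 2 * (c ^ (d + 1 - 3) * Y1) = c ^ (d + 1 - 3) * (2 * Y1) := by ring
              _ ≤ c ^ (d + 1 - 3) * (X1 / t) := hmul
              _ = c ^ (d - 3) * X1 * (c / t) := by rw [hpow]; ring
          have e2 : c ^ (d + 1 - 3) * X1 = c ^ (d - 3) * X1 + c ^ (d - 3) * X1 * (c / t) := by
            calc c ^ (d + 1 - 3) * X1 = c ^ (d - 3) * X1 * c := by rw [hpow]; ring
              _ = c ^ (d - 3) * X1 * (1 + c / t) := by rw [← hcc]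
              _ = c ^ (d - 3) * X1 + c ^ (d - 3) * X1 * (c / t) := by ring
          linarith
  -- Sharp bound S : for d ≥ 4, if 2 ≤ n - d and c^(d-3) ≤ (n-d)^γ then
  --   Δ d n + 2 ≤ c^(d-3) * (n-d)^(1+γ)
  have S : ∀ d : ℕ, 4 ≤ d → ∀ n : ℕ, (2 : ℝ) ≤ (n : ℝ) - (d : ℝ) →
      c ^ (d - 3) ≤ ((n : ℝ) - (d : ℝ)) ^ γ →
      Δ d n + 2 ≤ c ^ (d - 3) * ((n : ℝ) - (d : ℝ)) ^ (1 + γ) := by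
    intro d hd
    induction d, hd using Nat.le_induction with
    | base =>
      intro n hm2 hmγ
      set m : ℝ := (n : ℝ) - ((4 : ℕ) : ℝ) with hmdef
      have hm0 : (0 : ℝ) < m := by linarith
      have hn6 : 6 ≤ n := by
        have : (6 : ℝ) ≤ (n : ℝ) := by
          have : ((4 : ℕ) : ℝ) = 4 := by norm_num
          rw [this] at hmdef
          linarith [hm2]
        exact_mod_cast this
      have hmc : c ≤ m ^ γ := by simpa using hmγ
      have hmt : t ≤ m ^ γ := by
        rw [htdef]
        exact Real.rpow_le_rpow (by norm_num) (by linarith) hγ.le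
      have hmexp : m ^ (1 + γ) = m * m ^ γ := by
        rw [Real.rpow_add hm0, Real.rpow_one]
      have hmγ2 : 2 ≤ m ^ γ := by
        have hss : c * t ≤ m ^ γ * m ^ γ :=
          mul_le_mul hmc hmt ht0.le (Real.rpow_nonneg hm0.le γ)
        nlinarith [Real.rpow_pos_of_pos hm0 γ]
      have hΔ3 : Δ 3 (n - 1) ≤ m := by
        have := h3 (n - 1) (by omega)
        have hc1n : ((n - 1 : ℕ) : ℝ) = (n : ℝ) - 1 := by
          push_cast [show 1 ≤ n by omega]; ring
        rw [hc1n] at this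
        have : Δ 3 (n - 1) ≤ (n : ℝ) - 4 := by linarith
        simpa [hmdef] using this
      by_cases hcase : n < 8
      · -- low case
        have hl := hlow 4 n (by norm_num) (by omega) (by omega)
        norm_num at hl
        -- Δ 4 n ≤ Δ 3 (n-1) ≤ m ; need m + 2 ≤ c^1 * m^(1+γ)
        have hkey : m + 2 ≤ c ^ (4 - 3) * m ^ (1 + γ) := by
          have h41 : c ^ (4 - 3) = c := by norm_num
          rw [h41, hmexp]
          have h2' : c * t ≤ c * m ^ γ := mul_le_mul_of_nonneg_left hmt hc0.le
          have h4cm : 4 ≤ c * m ^ γ := by linarith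
          have h5 : 4 * m ≤ c * m ^ γ * m := mul_le_mul_of_nonneg_right h4cm hm0.le
          have hring : c * (m * m ^ γ) = c * m ^ γ * m := by ring
          linarith
        linarith
      · -- KK case
        push_neg at hcase
        have hhalf_ge : 4 ≤ n / 2 := by omega
        have hkk := hKK 4 n (by norm_num) hhalf_ge
        norm_num at hkk
        have hB := W 4 (by norm_num) (n / 2) hhalf_ge
        have hYpos : (0 : ℝ) ≤ ((n / 2 : ℕ) : ℝ) - ((4 : ℕ) : ℝ) + 2 := by
          have : ((4 : ℕ) : ℝ) ≤ ((n / 2 : ℕ) : ℝ) := by exact_mod_cast hhalf_ge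
          linarith
        have hYX : 2 * (((n / 2 : ℕ) : ℝ) - ((4 : ℕ) : ℝ) + 2) ≤ m := by
          have hnat : 2 * (n / 2 - 4 + 2) ≤ n - 4 := by omega
          have := (Nat.cast_le (α := ℝ)).mpr hnat
          push_cast [hhalf_ge, show 4 ≤ n by omega] at this
          rw [hmdef]
          push_cast
          linarith
        have hH := Hhalf _ _ hYpos hYX
        set Y1 : ℝ := (((n / 2 : ℕ) : ℝ) - ((4 : ℕ) : ℝ) + 2) ^ (1 + γ) with hY1
        have h41 : c ^ (4 - 3) = c := by norm_num
        rw [h41] at hB ⊢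
        -- Δ 4 n + 2 ≤ (m + 2) + 2*(Δ 4 (n/2) + 2) - 2 ≤ m + 2 + 2*c*Y1 - 2
        have hH2' : 2 * (c * Y1) ≤ c * (m ^ (1 + γ) / t) := by
          have hmul := mul_le_mul_of_nonneg_left hH hc0.le
          calc 2 * (c * Y1) = c * (2 * Y1) := by ring
            _ ≤ c * (m ^ (1 + γ) / t) := hmul
        have hm12 : m + 2 ≤ m ^ (1 + γ) := by
          rw [hmexp]
          have h6 : m * 2 ≤ m * m ^ γ := mul_le_mul_of_nonneg_left hmγ2 hm0.le
          linarith
        have e2 : c * m ^ (1 + γ) = m ^ (1 + γ) + c * (m ^ (1 + γ) / t) := by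
          calc c * m ^ (1 + γ) = (1 + c / t) * m ^ (1 + γ) := by rw [← hcc]
            _ = m ^ (1 + γ) + c * (m ^ (1 + γ) / t) := by ring
        linarith
    | succ d hd4 IH =>
      intro n hm2 hmγ
      set m : ℝ := (n : ℝ) - ((d + 1 : ℕ) : ℝ) with hmdef
      have hm0 : (0 : ℝ) < m := by linarith
      have hdn : d + 1 + 2 ≤ n := by
        have : ((d + 1 : ℕ) : ℝ) + 2 ≤ (n : ℝ) := by linarith
        exact_mod_cast this
      have hpow : c ^ (d + 1 - 3) = c ^ (d - 3) * c := by
        have hstep : d + 1 - 3 = (d - 3) + 1 := by omega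
        rw [hstep, pow_succ]
      have hmono : c ^ (d - 3) ≤ c ^ (d + 1 - 3) := by
        rw [hpow]
        nlinarith [pow_pos hc0 (d - 3)]
      have hcast : ((n - 1 : ℕ) : ℝ) - (d : ℝ) = m := by
        rw [hmdef]
        push_cast [show 1 ≤ n by omega]
        ring
      have hIHn : Δ d (n - 1) + 2 ≤ c ^ (d - 3) * m ^ (1 + γ) := by
        have := IH (n - 1) (by rw [hcast]; exact hm2) (by rw [hcast]; linarith [hmγ, hmono])
        rw [hcast] at this
        exact this
      have hmp : (0 : ℝ) ≤ m ^ (1 + γ) := Real.rpow_nonneg hm0.le _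
      by_cases hcase : n < 2 * (d + 1)
      · -- low case
        have hl := hlow (d + 1) n (by omega) (by omega) hcase
        simp only [Nat.add_sub_cancel] at hl
        have : c ^ (d - 3) * m ^ (1 + γ) ≤ c ^ (d + 1 - 3) * m ^ (1 + γ) :=
          mul_le_mul_of_nonneg_right hmono hmp
        linarith
      · -- KK case
        push_neg at hcase
        have hhalf_ge : d + 1 ≤ n / 2 := by omega
        have hkk := hKK (d + 1) n (by omega) hhalf_ge
        simp only [Nat.add_sub_cancel] at hkk
        have hB := W (d + 1) (by omega) (n / 2) hhalf_ge
        have hYpos : (0 : ℝ) ≤ ((n / 2 : ℕ) : ℝ) - ((d + 1 : ℕ) : ℝ) + 2 := by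
          have : ((d + 1 : ℕ) : ℝ) ≤ ((n / 2 : ℕ) : ℝ) := by exact_mod_cast hhalf_ge
          linarith
        have hYX : 2 * (((n / 2 : ℕ) : ℝ) - ((d + 1 : ℕ) : ℝ) + 2) ≤ m := by
          have hnat : 2 * (n / 2 - (d + 1) + 2) ≤ n - (d + 1) := by omega
          have := (Nat.cast_le (α := ℝ)).mpr hnat
          push_cast [hhalf_ge, show d + 1 ≤ n by omega] at this
          rw [hmdef]
          push_cast
          linarith
        have hH := Hhalf _ _ hYpos hYX
        set Y1 : ℝ := (((n / 2 : ℕ) : ℝ) - ((d + 1 : ℕ) : ℝ) + 2) ^ (1 + γ) with hY1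
        have hH2' : 2 * (c ^ (d + 1 - 3) * Y1) ≤ c ^ (d - 3) * m ^ (1 + γ) * (c / t) := by
          have hmul := mul_le_mul_of_nonneg_left hH (pow_pos hc0 (d + 1 - 3)).le
          calc 2 * (c ^ (d + 1 - 3) * Y1) = c ^ (d + 1 - 3) * (2 * Y1) := by ring
            _ ≤ c ^ (d + 1 - 3) * (m ^ (1 + γ) / t) := hmul
            _ = c ^ (d - 3) * m ^ (1 + γ) * (c / t) := by rw [hpow]; ring
        have e2 : c ^ (d + 1 - 3) * m ^ (1 + γ) =
            c ^ (d - 3) * m ^ (1 + γ) + c ^ (d - 3) * m ^ (1 + γ) * (c / t) := by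
          calc c ^ (d + 1 - 3) * m ^ (1 + γ) = c ^ (d - 3) * m ^ (1 + γ) * c := by
                rw [hpow]; ring
            _ = c ^ (d - 3) * m ^ (1 + γ) * (1 + c / t) := by rw [← hcc]
            _ = c ^ (d - 3) * m ^ (1 + γ) + c ^ (d - 3) * m ^ (1 + γ) * (c / t) := by ring
        linarith
  -- Final assembly
  by_cases hd3 : d = 3
  · subst hd3
    have hexp0 : 2 * (((3 : ℕ) : ℝ) - 3) / ε = 0 := by norm_num
    rw [hexp0, Real.rpow_zero] at hn
    simp only [Nat.ceil_one] at hn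
    have hn4 : 4 ≤ n := by omega
    have h1 : (1 : ℝ) ≤ (n : ℝ) - ((3 : ℕ) : ℝ) := by
      have : (4 : ℝ) ≤ (n : ℝ) := by exact_mod_cast hn4
      push_cast
      linarith
    have h2 : Δ 3 n ≤ (n : ℝ) - ((3 : ℕ) : ℝ) := by
      have := h3 n (by omega)
      push_cast
      push_cast at this
      linarith
    calc Δ 3 n ≤ (n : ℝ) - ((3 : ℕ) : ℝ) := h2
      _ = ((n : ℝ) - ((3 : ℕ) : ℝ)) ^ (1 : ℝ) := (Real.rpow_one _).symm
      _ ≤ ((n : ℝ) - ((3 : ℕ) : ℝ)) ^ (1 + ε) :=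
        Real.rpow_le_rpow_of_exponent_le h1 (by linarith)
  · have hd4 : 4 ≤ d := by omega
    set X : ℝ := c ^ (2 * ((d : ℝ) - 3) / ε) with hXdef
    have hX1 : 1 < X := by
      rw [hXdef]
      apply (Real.one_lt_rpow_iff_of_pos hc0).mpr
      have hdr : (4 : ℝ) ≤ (d : ℝ) := by exact_mod_cast hd4
      exact Or.inl ⟨hc1, div_pos (by nlinarith) hε⟩
    have hceil2 : 2 ≤ ⌈X⌉₊ := by
      have h1 : (1 : ℕ) < ⌈X⌉₊ := Nat.lt_ceil.mpr (by exact_mod_cast hX1)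
      omega
    set m : ℝ := (n : ℝ) - (d : ℝ) with hmdef
    have hnn : ((d : ℝ) + (⌈X⌉₊ : ℝ)) ≤ (n : ℝ) := by exact_mod_cast hn
    have hmX : X ≤ m := by
      have := Nat.le_ceil X
      rw [hmdef]; linarith
    have hm2 : (2 : ℝ) ≤ m := by
      have h2c : (2 : ℝ) ≤ (⌈X⌉₊ : ℝ) := by exact_mod_cast hceil2
      rw [hmdef]; linarith
    have hm0 : (0 : ℝ) < m := by linarith
    have hXγ : X ^ γ = c ^ (d - 3 : ℕ) := by
      rw [hXdef, ← Real.rpow_natCast c (d - 3), ← Real.rpow_mul hc0.le]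
      congr 1
      have hcast : ((d - 3 : ℕ) : ℝ) = (d : ℝ) - 3 := by
        push_cast [hd]; ring
      rw [hcast, hγdef]
      field_simp
    have hmγ : c ^ (d - 3 : ℕ) ≤ m ^ γ := by
      have h1 : X ^ γ ≤ m ^ γ :=
        Real.rpow_le_rpow (by linarith) hmX hγ.le
      rw [hXγ] at h1
      exact h1
    have hS := S d hd4 n hm2 hmγ
    have h8 : c ^ (d - 3 : ℕ) * m ^ (1 + γ) ≤ m ^ γ * m ^ (1 + γ) :=
      mul_le_mul_of_nonneg_right hmγ (Real.rpow_nonneg hm0.le _)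
    have h7 : m ^ γ * m ^ (1 + γ) = m ^ (1 + ε) := by
      rw [← Real.rpow_add hm0]
      congr 1
      rw [hγdef]; ring
    linarith
end
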